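/- arXiv:2505.18765 — 2 statements merged into one kernel-verified Lean document; each statement's English description precedes it below -/
import Mathlib

section
/- Let H be a real Hilbert space and let v_1, …, v_K ∈ H. Then the function w ↦ ‖Σ_{k=1}^K w_k v_k‖² attains its minimum over the standard simplex Δ_K at some point w*, and for any such minimizer w*, the element v* := Σ_{k=1}^K w*_k v_k is a maximizer over all v ∈ H of the function φ(v) := min_{1≤k≤K} ⟨v_k, v⟩ − (1/2)‖v‖²; that is, φ(v) ≤ φ(v*) for every v ∈ H. -/
/-!
Minimizing `‖∑ k, w k • v k‖` over the simplex is minimizing the norm over the convex hull `C` of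
the `v k`. The variational inequality for this projection of `0` onto `C` gives
`‖v*‖² ≤ ⟪v k, v*⟫` for every `k`. On the other hand, for any `x`, the minimum of the `⟪v k, x⟫` is at
most their `w*`-average `⟪v*, x⟫`, and `⟪v*, x⟫ - ½‖x‖² ≤ ½‖v*‖²`; together,
`φ(x) ≤ ½‖v*‖² ≤ φ(v*)`.
-/

open scoped RealInnerProductSpace

section

variable {H : Type*} [NormedAddCommGroup H] [InnerProductSpace ℝ H]

theorem norm_sq_le_inner_of_isMinOn_norm {C : Set H} (hC : Convex ℝ C) {V : H} (hV : V ∈ C)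
    (hmin : IsMinOn (‖·‖) C V) {y : H} (hy : y ∈ C) : ‖V‖ ^ 2 ≤ ⟪y, V⟫ := by
  have : Nonempty C := ⟨⟨V, hV⟩⟩
  have hinf : ‖0 - V‖ = ⨅ z : C, ‖0 - (z : H)‖ := by
    simp only [zero_sub, norm_neg]
    exact le_antisymm (le_ciInf fun z => isMinOn_iff.mp hmin z z.2)
      (ciInf_le ⟨0, Set.forall_mem_range.mpr fun (z : C) => norm_nonneg (z : H)⟩ ⟨V, hV⟩)
  have h := (norm_eq_iInf_iff_real_inner_le_zero hC hV).mp hinf y hy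
  rw [zero_sub, inner_neg_left, inner_sub_right, real_inner_self_eq_norm_sq,
    real_inner_comm] at h
  linarith

theorem inner_sub_half_norm_sq_le (V x : H) : ⟪V, x⟫ - 1 / 2 * ‖x‖ ^ 2 ≤ 1 / 2 * ‖V‖ ^ 2 := by
  nlinarith [norm_sub_sq_real V x, sq_nonneg ‖V - x‖]

variable {ι : Type*} [Fintype ι]

theorem exists_isMinOn_norm_sq_sum_smul [Nonempty ι] (v : ι → H) :
    ∃ w ∈ stdSimplex ℝ ι, IsMinOn (fun u : ι → ℝ => ‖∑ i, u i • v i‖ ^ 2) (stdSimplex ℝ ι) w :=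
  (isCompact_stdSimplex ℝ ι).exists_isMinOn Set.Nonempty.of_subtype
    (by fun_prop)

theorem norm_sq_le_inner_of_isMinOn_stdSimplex (v : ι → H) {w : ι → ℝ}
    (hw : w ∈ stdSimplex ℝ ι)
    (hmin : IsMinOn (fun u : ι → ℝ => ‖∑ i, u i • v i‖ ^ 2) (stdSimplex ℝ ι) w) (k : ι) :
    ‖∑ i, w i • v i‖ ^ 2 ≤ ⟪v k, ∑ i, w i • v i⟫ := by
  classical
  let L := Fintype.linearCombination ℝ v
  refine norm_sq_le_inner_of_isMinOn_norm ((convex_stdSimplex ℝ ι).linear_image L)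
    ⟨w, hw, rfl⟩ ?_ ⟨Pi.single k 1, single_mem_stdSimplex ℝ k, by simp [L]⟩
  rintro _ ⟨u, hu, rfl⟩
  exact pow_le_pow_iff_left₀ (norm_nonneg _) (norm_nonneg _) two_ne_zero |>.mp (hmin hu)

theorem inf'_le_sum_mul_of_mem_stdSimplex (hι : (Finset.univ : Finset ι).Nonempty)
    (f : ι → ℝ) {w : ι → ℝ} (hw : w ∈ stdSimplex ℝ ι) :
    Finset.univ.inf' hι f ≤ ∑ i, w i * f i := by
  have h := Finset.inf_le_centerMass (f := f) (fun i _ => hw.1 i) (hw.2 ▸ one_pos)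
  rwa [Finset.centerMass_eq_of_sum_1 _ _ hw.2] at h

end

theorem stmt0_general {H : Type*} [NormedAddCommGroup H] [InnerProductSpace ℝ H]
    {K : ℕ} (hK : 0 < K) (v : Fin K → H) :
    (∃ w : Fin K → ℝ, w ∈ stdSimplex ℝ (Fin K) ∧
      ∀ u ∈ stdSimplex ℝ (Fin K), ‖∑ k, w k • v k‖ ^ 2 ≤ ‖∑ k, u k • v k‖ ^ 2) ∧
    (∀ w : Fin K → ℝ, w ∈ stdSimplex ℝ (Fin K) →
      (∀ u ∈ stdSimplex ℝ (Fin K), ‖∑ k, w k • v k‖ ^ 2 ≤ ‖∑ k, u k • v k‖ ^ 2) →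
      ∀ x : H,
        Finset.inf' Finset.univ ⟨⟨0, hK⟩, Finset.mem_univ _⟩ (fun k => ⟪v k, x⟫)
            - 1 / 2 * ‖x‖ ^ 2 ≤
          Finset.inf' Finset.univ ⟨⟨0, hK⟩, Finset.mem_univ _⟩
              (fun k => ⟪v k, ∑ i, w i • v i⟫)
            - 1 / 2 * ‖∑ i, w i • v i‖ ^ 2) := by
  have : Nonempty (Fin K) := ⟨⟨0, hK⟩⟩
  refine ⟨?_, fun w hw hmin x => ?_⟩
  · obtain ⟨w, hw, hmin⟩ := exists_isMinOn_norm_sq_sum_smul v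
    exact ⟨w, hw, isMinOn_iff.mp hmin⟩
  set V := ∑ i, w i • v i
  have hφx : Finset.univ.inf' ⟨⟨0, hK⟩, Finset.mem_univ _⟩ (fun k => ⟪v k, x⟫) ≤ ⟪V, x⟫ := by
    simp only [V, sum_inner, real_inner_smul_left]
    exact inf'_le_sum_mul_of_mem_stdSimplex _ _ hw
  have hφV : ‖V‖ ^ 2 ≤ Finset.univ.inf' ⟨⟨0, hK⟩, Finset.mem_univ _⟩ (fun k => ⟪v k, V⟫) :=
    Finset.le_inf' _ _ fun k _ =>
      norm_sq_le_inner_of_isMinOn_stdSimplex v hw (isMinOn_iff.mpr hmin) k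
  linarith [inner_sub_half_norm_sq_le V x]

/-- Hilbert-space form of Theorem 1 (MGDA-type duality): the function
`w ↦ ‖∑ k, w k • v k‖²` attains its minimum over the standard simplex, and for any
minimizer `w*`, the element `v* = ∑ k, w* k • v k` maximizes
`φ(v) = min_k ⟪v k, v⟫ − (1/2)‖v‖²` over all `v`. -/
theorem stmt0 {H : Type*} [NormedAddCommGroup H] [InnerProductSpace ℝ H] [CompleteSpace H]
    {K : ℕ} (hK : 0 < K) (v : Fin K → H) :
    (∃ w : Fin K → ℝ, w ∈ stdSimplex ℝ (Fin K) ∧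
      ∀ u ∈ stdSimplex ℝ (Fin K), ‖∑ k, w k • v k‖ ^ 2 ≤ ‖∑ k, u k • v k‖ ^ 2) ∧
    (∀ w : Fin K → ℝ, w ∈ stdSimplex ℝ (Fin K) →
      (∀ u ∈ stdSimplex ℝ (Fin K), ‖∑ k, w k • v k‖ ^ 2 ≤ ‖∑ k, u k • v k‖ ^ 2) →
      ∀ x : H,
        Finset.inf' Finset.univ ⟨⟨0, hK⟩, Finset.mem_univ _⟩ (fun k => ⟪v k, x⟫)
            - 1 / 2 * ‖x‖ ^ 2 ≤
          Finset.inf' Finset.univ ⟨⟨0, hK⟩, Finset.mem_univ _⟩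
              (fun k => ⟪v k, ∑ i, w i • v i⟫)
            - 1 / 2 * ‖∑ i, w i • v i‖ ^ 2) :=
  stmt0_general hK v
end

section
/- Let E be a real Hilbert space, K ≥ 1, and for k = 1, …, K let f_k : E → ℝ be differentiable at a point x ∈ E with gradient g_k := ∇f_k(x). If x is Pareto optimal for (f_1, …, f_K) — i.e., there is no y ∈ E with f_k(y) ≤ f_k(x) for all k and f_j(y) < f_j(x) for at least one j — then x is Pareto stationary: there exists w ∈ Δ_K such that Σ_{k=1}^K w_k g_k = 0. -/
open scoped RealInnerProductSpace

/-!
At a Pareto optimal point there is no direction `v` along which every `f k` decreases to first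
order, i.e. with `⟪g k, v⟫ < 0` for all `k`. If `0` were not a convex combination of the
gradients, the negative of the minimum-norm point of the compact convex set of such combinations
would be such a direction (Gordan's alternative).
-/

open Filter Topology

section Descent

variable {E : Type*} [NormedAddCommGroup E] [NormedSpace ℝ E]

theorem HasLineDerivAt.eventually_lt_of_neg {f : E → ℝ} {f' : ℝ} {x v : E}
    (hf : HasLineDerivAt ℝ f f' x v) (hf' : f' < 0) :
    ∀ᶠ t in 𝓝[>] (0 : ℝ), f (x + t • v) < f x := by
  have hslope := (HasDerivAt.tendsto_slope_zero_right hf).eventually (eventually_lt_nhds hf')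
  filter_upwards [hslope, self_mem_nhdsWithin] with t hneg (ht : 0 < t)
  simp only [zero_add, zero_smul, add_zero, smul_eq_mul] at hneg
  linarith [neg_of_mul_neg_right hneg (inv_nonneg.2 ht.le)]

end Descent

section Gordan

variable {F : Type*} [NormedAddCommGroup F] [InnerProductSpace ℝ F]

theorem exists_forall_inner_pos_of_zero_notMem {C : Set F} (hne : C.Nonempty)
    (hcomplete : IsComplete C) (hconv : Convex ℝ C) (h0 : (0 : F) ∉ C) :
    ∃ p : F, ∀ c ∈ C, 0 < ⟪c, p⟫ := by
  obtain ⟨p, hpC, hmin⟩ := exists_norm_eq_iInf_of_complete_convex hne hcomplete hconv 0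
  have hvar := (norm_eq_iInf_iff_real_inner_le_zero hconv hpC).1 hmin
  have hp : 0 < ⟪p, p⟫ := real_inner_self_pos.2 (ne_of_mem_of_not_mem hpC h0)
  refine ⟨p, fun c hc => ?_⟩
  have := hvar c hc
  rw [zero_sub, inner_neg_left, inner_sub_right, real_inner_comm] at this
  linarith

theorem exists_forall_inner_neg_of_not_exists_sum_smul_eq_zero {ι : Type*} [Fintype ι]
    (g : ι → F) (h : ¬ ∃ w ∈ stdSimplex ℝ ι, ∑ i, w i • g i = 0) :
    ∃ v : F, ∀ i, ⟪g i, v⟫ < 0 := by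
  classical
  cases isEmpty_or_nonempty ι
  · exact ⟨0, isEmptyElim⟩
  set L := Fintype.linearCombination ℝ g
  have hL : Continuous L := L.continuous_of_finiteDimensional
  have hg : ∀ i, g i ∈ L '' stdSimplex ℝ ι := fun i =>
    ⟨Pi.single i 1, single_mem_stdSimplex ℝ i, by simp [L, Fintype.linearCombination_apply_single]⟩
  have h0 : (0 : F) ∉ L '' stdSimplex ℝ ι := fun ⟨w, hw, hw0⟩ => h ⟨w, hw, hw0⟩
  obtain ⟨p, hp⟩ := exists_forall_inner_pos_of_zero_notMem ⟨_, hg (Classical.arbitrary ι)⟩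
    ((isCompact_stdSimplex ℝ ι).image hL).isComplete ((convex_stdSimplex ℝ ι).linear_image L) h0
  refine ⟨-p, fun i => ?_⟩
  rw [inner_neg_right, neg_lt_zero]
  exact hp _ (hg i)

end Gordan

/-- Claim 1 (Appendix C): Pareto optimality implies Pareto stationarity. If `x` is
Pareto optimal for `(f 1, …, f K)`, each `f k` differentiable at `x` with gradient
`g k`, then some convex combination of the gradients vanishes. -/
theorem stmt3 {E : Type*} [NormedAddCommGroup E] [InnerProductSpace ℝ E] [CompleteSpace E]
    {K : ℕ} (hK : 1 ≤ K) (f : Fin K → E → ℝ) (g : Fin K → E) (x : E)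
    (hgrad : ∀ k, HasGradientAt (f k) (g k) x)
    (hpareto : ¬ ∃ y : E, (∀ k, f k y ≤ f k x) ∧ ∃ j, f j y < f j x) :
    ∃ w : Fin K → ℝ, w ∈ stdSimplex ℝ (Fin K) ∧ ∑ k, w k • g k = 0 := by
  by_contra hstat
  obtain ⟨v, hv⟩ := exists_forall_inner_neg_of_not_exists_sum_smul_eq_zero g hstat
  have hdescent : ∀ k, ∀ᶠ t in 𝓝[>] (0 : ℝ), f k (x + t • v) < f k x := fun k =>
    ((hgrad k).hasFDerivAt.hasLineDerivAt v).eventually_lt_of_neg (hv k)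
  obtain ⟨t, ht⟩ := (eventually_all.2 hdescent).exists
  exact hpareto ⟨x + t • v, fun k => (ht k).le, ⟨0, hK⟩, ht _⟩
end
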